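/- arXiv:2604.13330 — 6 statements merged into one kernel-verified Lean document; each statement's English description precedes it below -/
import Mathlib

section
/- Let Q be a bounded measurable subset of ℝ^m of finite Lebesgue measure, let E be a finite-dimensional real normed space, and let φ : Q × E → ℝ be a Carathéodory function (measurable in z ∈ Q, continuous in λ ∈ E) with φ ≥ 0. Let (Fⁿ) be a sequence of measurable functions Fⁿ : Q → E such that sup_n ∫_Q φ(z, Fⁿ(z)) dz < ∞. Let ν = (ν_z)_{z∈Q} be a measurable family of Borel probability measures on E such that for every bounded Carathéodory function h : Q × E → ℝ one has h(·, Fⁿ(·)) → (z ↦ ∫_E h(z,λ) dν_z(λ)) weak-* in L^∞(Q), i.e. ∫_Q h(z,Fⁿ(z)) ψ(z) dz → ∫_Q (∫_E h(z,λ) dν_z(λ)) ψ(z) dz for every ψ ∈ L¹(Q). Define the (possibly infinite) function z ↦ ∫_E φ(z,λ) dν_z(λ) as the monotone increasing limit, as R → ∞, of z ↦ ∫_E min(φ(z,λ), R) dν_z(λ). Then z ↦ ∫_E φ(z,λ) dν_z(λ) belongs to L¹(Q), and there exist a subsequence (Fⁿᵏ) and a finite positive Borel measure μ on the closure of Q such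 that for every continuous function ψ on the closure of Q: ∫_Q φ(z, Fⁿᵏ(z)) ψ(z) dz → ∫_Q (∫_E φ(z,λ) dν_z(λ)) ψ(z) dz + ∫ ψ dμ. -/
/-!
The measures `φ(z, Fⁿ(z)) dz` have bounded mass and live on the compact set `closure Q`, so by
Prokhorov's theorem a subsequence converges weakly to a finite measure `σ`. Testing the
Young-measure convergence of the truncations `min (φ, R)` against nonnegative continuous functions
shows that the measure with density `z ↦ ∫ min (φ(z, λ), R) dν_z(λ)` lies below `σ`; letting
`R → ∞` gives `φ̄ dz ≤ σ`. Hence `φ̄` is integrable, and the concentration measure is `σ - φ̄ dz`.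
-/

open MeasureTheory Filter Topology BoundedContinuousFunction
open scoped ENNReal NNReal

theorem BoundedContinuousFunction.exists_eqOn_of_isCompact {X : Type*} [TopologicalSpace X]
    {K : Set X} (hK : IsCompact K) {ψ : X → ℝ} (hψ : Continuous ψ) :
    ∃ f : X →ᵇ ℝ, Set.EqOn f ψ K := by
  obtain ⟨M, hM⟩ := hK.exists_bound_of_continuousOn hψ.continuousOn
  set M' := max M 0
  refine ⟨.ofNormedAddCommGroup (fun x => max (-M') (min M' (ψ x)))
    (continuous_const.max (continuous_const.min hψ)) M' fun x => ?_, fun x hx => ?_⟩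
  · rw [Real.norm_eq_abs, abs_le]
    exact ⟨le_max_left _ _, max_le (by simp [M']) (min_le_left _ _)⟩
  · have := abs_le.1 ((Real.norm_eq_abs _).symm.le.trans ((hM x hx).trans (le_max_left M 0)))
    change max (-M') (min M' (ψ x)) = ψ x
    rw [min_eq_right this.2, max_eq_right this.1]

namespace MeasureTheory

namespace FiniteMeasure

variable {X : Type*} [MeasurableSpace X]

lemma mass_smul_toFiniteMeasure (c : ℝ≥0) (P : ProbabilityMeasure X) :
    (c • P.toFiniteMeasure).mass = c := by
  rw [mass, smul_apply, ProbabilityMeasure.coeFn_comp_toFiniteMeasure_eq_coeFn,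
    ProbabilityMeasure.coeFn_univ, smul_eq_mul, mul_one]

lemma normalize_smul_toFiniteMeasure [Nonempty X] {c : ℝ≥0} (hc : c ≠ 0)
    (P : ProbabilityMeasure X) : (c • P.toFiniteMeasure).normalize = P := by
  have hne : c • P.toFiniteMeasure ≠ 0 := by
    rwa [← mass_nonzero_iff, mass_smul_toFiniteMeasure]
  refine ProbabilityMeasure.eq_of_forall_apply_eq _ _ fun s _ => ?_
  rw [normalize_eq_of_nonzero _ hne, mass_smul_toFiniteMeasure, smul_apply,
    ProbabilityMeasure.coeFn_comp_toFiniteMeasure_eq_coeFn, smul_eq_mul, inv_mul_cancel_left₀ hc]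

variable [TopologicalSpace X] [T2Space X] [TopologicalSpace.PseudoMetrizableSpace X]
  [TopologicalSpace.SeparableSpace X] [BorelSpace X]

theorem exists_subseq_tendsto_of_isCompact {K : Set X} (hK : IsCompact K) {C : ℝ≥0}
    (μ : ℕ → FiniteMeasure X) (hmass : ∀ n, (μ n).mass ≤ C) (hsupp : ∀ n, μ n Kᶜ = 0) :
    ∃ ν : FiniteMeasure X, ν Kᶜ = 0 ∧
      ∃ φ : ℕ → ℕ, StrictMono φ ∧ Tendsto (μ ∘ φ) atTop (𝓝 ν) := by
  -- Subsequences are extracted in the metrizable space of probability measures, so the masses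
  -- and the normalized measures are treated separately.
  obtain ⟨m, -, φ₁, hφ₁, hm⟩ := (isCompact_Icc (a := 0) (b := C)).tendsto_subseq
    (x := fun n => (μ n).mass) fun n => ⟨zero_le, hmass n⟩
  rcases eq_or_ne m 0 with rfl | hm0
  · exact ⟨0, rfl, φ₁, hφ₁, tendsto_zero_of_tendsto_zero_mass hm⟩
  have hne : ∀ᶠ n in atTop, μ (φ₁ n) ≠ 0 := by
    filter_upwards [hm.eventually (isOpen_compl_singleton.mem_nhds hm0)] with n hn
    exact (mass_nonzero_iff _).1 hn
  obtain ⟨n₀, hn₀⟩ := hne.exists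
  have : Nonempty X := by
    by_contra h
    rw [not_nonempty_iff] at h
    exact hn₀ (by ext s; simp [Set.eq_empty_of_isEmpty s])
  have hnorm : ∀ᶠ n in atTop, ∀ _ : ℕ, (μ (φ₁ n)).normalize Kᶜ ≤ 0 := by
    filter_upwards [hne] with n hn _
    rw [normalize_eq_of_nonzero _ hn, hsupp, mul_zero]
  obtain ⟨P, hP, φ₂, hφ₂, hPlim⟩ :=
    (isCompact_setOfPred_probabilityMeasure_mass_eq_compl_isCompact_le (u := fun _ => 0)
      tendsto_const_nhds (fun _ => hK) (Or.inr monotone_const)).tendsto_subseq' hnorm.frequently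
  refine ⟨m • P.toFiniteMeasure, ?_, φ₁ ∘ φ₂, hφ₁.comp hφ₂, ?_⟩
  · rw [smul_apply, ProbabilityMeasure.coeFn_comp_toFiniteMeasure_eq_coeFn,
      le_antisymm (hP 0) zero_le, smul_zero]
  · refine tendsto_of_tendsto_normalize_testAgainstNN_of_tendsto_mass ?_ ?_
    · rw [normalize_smul_toFiniteMeasure hm0]; exact hPlim
    · rw [mass_smul_toFiniteMeasure]; exact hm.comp hφ₂.tendsto_atTop

end FiniteMeasure

section Integrals

variable {X : Type*} [MeasurableSpace X]

theorem integral_withDensity_ofReal {μ : Measure X} {u : X → ℝ} (hu : Measurable u)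
    (hu0 : ∀ x, 0 ≤ u x) (ψ : X → ℝ) :
    ∫ x, ψ x ∂μ.withDensity (fun x => ENNReal.ofReal (u x)) = ∫ x, u x * ψ x ∂μ := by
  change ∫ x, ψ x ∂μ.withDensity (fun x => ((u x).toNNReal : ℝ≥0∞)) = _
  simp_rw [integral_withDensity_eq_integral_smul hu.real_toNNReal, NNReal.smul_def,
    Real.coe_toNNReal _ (hu0 _), smul_eq_mul]

theorem integral_eq_integral_add_integral_sub_of_le {ρ σ : Measure X} [IsFiniteMeasure σ]
    (h : ρ ≤ σ) {ψ : X → ℝ} (hψ : Integrable ψ σ) :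
    ∫ x, ψ x ∂σ = ∫ x, ψ x ∂ρ + ∫ x, ψ x ∂(σ - ρ) := by
  have : IsFiniteMeasure ρ := isFiniteMeasure_of_le σ h
  conv_lhs => rw [← Measure.sub_add_cancel_of_le h]
  rw [integral_add_measure (hψ.mono_measure Measure.sub_le) (hψ.mono_measure h), add_comm]

theorem Measure.restrict_compl_closure_eq_zero [TopologicalSpace X] [OpensMeasurableSpace X]
    (μ : Measure X) (s : Set X) : μ.restrict s (closure s)ᶜ = 0 := by
  rw [Measure.restrict_apply isClosed_closure.measurableSet.compl,
    (disjoint_compl_left.mono_right subset_closure).inter_eq, measure_empty]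

theorem _root_.Continuous.integrable_of_measure_compl_eq_zero [TopologicalSpace X]
    [OpensMeasurableSpace X] [T2Space X] {μ : Measure X} [IsFiniteMeasure μ] {K : Set X}
    (hK : IsCompact K) (hμK : μ Kᶜ = 0) {ψ : X → ℝ} (hψ : Continuous ψ) : Integrable ψ μ := by
  rw [← Measure.restrict_eq_self_of_ae_mem (mem_ae_iff.2 hμK)]
  exact hψ.continuousOn.integrableOn_compact hK

end Integrals

section WeakCompactness

variable {X : Type*} [TopologicalSpace X] [T2Space X] [TopologicalSpace.PseudoMetrizableSpace X]
  [TopologicalSpace.SeparableSpace X] [MeasurableSpace X] [BorelSpace X]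

theorem exists_subseq_tendsto_integral_of_isCompact {K : Set X} (hK : IsCompact K)
    (μ : ℕ → Measure X) {C : ℝ≥0∞} (hC : C < ∞) (hmass : ∀ n, μ n Set.univ ≤ C)
    (hsupp : ∀ n, μ n Kᶜ = 0) :
    ∃ ν : Measure X, IsFiniteMeasure ν ∧ ν Kᶜ = 0 ∧ ∃ φ : ℕ → ℕ, StrictMono φ ∧
      ∀ ψ : X → ℝ, Continuous ψ → Tendsto (fun n => ∫ x, ψ x ∂μ (φ n)) atTop (𝓝 (∫ x, ψ x ∂ν)) := by
  have (n : ℕ) : IsFiniteMeasure (μ n) := ⟨(hmass n).trans_lt hC⟩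
  obtain ⟨ν, hνK, φ, hφ, hlim⟩ := FiniteMeasure.exists_subseq_tendsto_of_isCompact hK
    (fun n => ⟨μ n, inferInstance⟩) (C := C.toNNReal)
    (fun n => ENNReal.toNNReal_mono hC.ne (hmass n))
    (fun n => (FiniteMeasure.null_iff_toMeasure_null _ _).2 (hsupp n))
  have hνK' : (ν : Measure X) Kᶜ = 0 := (FiniteMeasure.null_iff_toMeasure_null _ _).1 hνK
  refine ⟨ν, inferInstance, hνK', φ, hφ, fun ψ hψ => ?_⟩
  obtain ⟨f, hf⟩ := BoundedContinuousFunction.exists_eqOn_of_isCompact hK hψ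
  have key (ρ : Measure X) (hρ : ρ Kᶜ = 0) : ∫ x, f x ∂ρ = ∫ x, ψ x ∂ρ :=
    integral_congr_ae (Eventually.mono (p := (· ∈ K)) (mem_ae_iff.2 hρ) fun x hx => hf hx)
  have hlim_f := FiniteMeasure.tendsto_iff_forall_integral_tendsto.1 hlim f
  rw [key _ hνK'] at hlim_f
  exact hlim_f.congr fun n => key _ (hsupp _)

theorem exists_subseq_tendsto_integral_mul_of_lintegral_le {μ : Measure X} {K : Set X}
    (hK : IsCompact K) (hμK : μ Kᶜ = 0) {u : ℕ → X → ℝ} (hu : ∀ n, Measurable (u n))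
    (hu0 : ∀ n x, 0 ≤ u n x) {C : ℝ≥0∞} (hC : C < ∞)
    (hbound : ∀ n, ∫⁻ x, ENNReal.ofReal (u n x) ∂μ ≤ C) :
    ∃ σ : Measure X, IsFiniteMeasure σ ∧ σ Kᶜ = 0 ∧ ∃ φ : ℕ → ℕ, StrictMono φ ∧
      ∀ ψ : X → ℝ, Continuous ψ →
        Tendsto (fun n => ∫ x, u (φ n) x * ψ x ∂μ) atTop (𝓝 (∫ x, ψ x ∂σ)) := by
  obtain ⟨σ, hσ, hσK, φ, hφ, hlim⟩ := exists_subseq_tendsto_integral_of_isCompact hK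
    (fun n => μ.withDensity fun x => ENNReal.ofReal (u n x)) hC (fun n => by simpa using hbound n)
    (fun n => withDensity_absolutelyContinuous _ _ hμK)
  exact ⟨σ, hσ, hσK, φ, hφ, by simpa only [integral_withDensity_ofReal (hu _) (hu0 _)] using hlim⟩

end WeakCompactness

section Comparison

variable {X : Type*} [TopologicalSpace X] [TopologicalSpace.PseudoMetrizableSpace X]
  [MeasurableSpace X] [BorelSpace X]

theorem Measure.le_of_forall_lintegral_le {μ ν : Measure X} [IsFiniteMeasure ν]
    (h : ∀ f : X →ᵇ ℝ≥0, ∫⁻ x, f x ∂μ ≤ ∫⁻ x, f x ∂ν) : μ ≤ ν := by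
  have : IsFiniteMeasure μ := ⟨by simpa using (h 1).trans_lt (by simp)⟩
  have hclosed : ∀ F, IsClosed F → μ F ≤ ν F := fun F hF =>
    le_of_tendsto_of_tendsto' (HasOuterApproxClosed.tendsto_lintegral_apprSeq hF μ)
      (HasOuterApproxClosed.tendsto_lintegral_apprSeq hF ν) fun n => h _
  refine Measure.le_iff.2 fun s hs => ?_
  rw [hs.measure_eq_iSup_isClosed_of_ne_top (measure_ne_top μ s)]
  exact iSup₂_le fun F hFs => iSup_le fun hF => (hclosed F hF).trans (measure_mono hFs)

theorem Measure.withDensity_iSup_ofReal_le {μ σ : Measure X} [IsFiniteMeasure μ]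
    [IsFiniteMeasure σ] {g : ℕ → X → ℝ}
    (hg : ∀ R, Measurable (g R)) (hg0 : ∀ R x, 0 ≤ g R x) (hgb : ∀ R, ∃ C, ∀ x, g R x ≤ C)
    (hmono : ∀ x, Monotone (g · x))
    (h : ∀ R (f : X →ᵇ ℝ≥0), ∫ x, g R x * f x ∂μ ≤ ∫ x, (f x : ℝ) ∂σ) :
    μ.withDensity (fun x => ⨆ R, ENNReal.ofReal (g R x)) ≤ σ := by
  refine Measure.le_of_forall_lintegral_le fun f => ?_
  have hgf (R : ℕ) : Integrable (fun x => g R x * f x) μ := by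
    obtain ⟨C, hC⟩ := hgb R
    exact (integrable_of_nnreal μ f).bdd_mul (hg R).aestronglyMeasurable
      (.of_forall fun x => by rw [Real.norm_of_nonneg (hg0 R x)]; exact hC x)
  rw [lintegral_withDensity_eq_lintegral_mul _ (.iSup fun R => (hg R).ennreal_ofReal)
    (measurable_coe_ennreal_comp f)]
  simp_rw [Pi.mul_apply, ENNReal.iSup_mul]
  rw [lintegral_iSup (f := fun R x => ENNReal.ofReal (g R x) * f x)
    (fun R => (hg R).ennreal_ofReal.mul (measurable_coe_ennreal_comp f))
    fun R R' hR x => mul_le_mul_left (ENNReal.ofReal_le_ofReal (hmono x hR)) _]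
  refine iSup_le fun R => ?_
  calc ∫⁻ x, ENNReal.ofReal (g R x) * f x ∂μ = ENNReal.ofReal (∫ x, g R x * f x ∂μ) := by
        rw [ofReal_integral_eq_lintegral_ofReal (hgf R)
          (.of_forall fun x => mul_nonneg (hg0 R x) (f x).2)]
        simp_rw [ENNReal.ofReal_mul (hg0 R _), ENNReal.ofReal_coe_nnreal]
    _ ≤ ENNReal.ofReal (∫ x, (f x : ℝ) ∂σ) := ENNReal.ofReal_le_ofReal (h R f)
    _ = ∫⁻ x, f x ∂σ := (lintegral_coe_eq_integral f (integrable_of_nnreal σ f)).symm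

end Comparison

section YoungMeasure

variable {Z E : Type*} [MeasurableSpace E]

noncomputable def truncatedYoungAverage (ν : Z → Measure E) (φ : Z → E → ℝ) (R : ℝ) (z : Z) :
    ℝ :=
  ∫ l, min (φ z l) R ∂ν z

variable {ν : Z → Measure E} {φ : Z → E → ℝ}

theorem measurable_truncatedYoungAverage [MeasurableSpace Z] (hν : Measurable ν)
    [∀ z, IsProbabilityMeasure (ν z)] (hφ : Measurable (Function.uncurry φ)) (R : ℝ) :
    Measurable (truncatedYoungAverage ν φ R) :=
  have : ProbabilityTheory.IsMarkovKernel ⟨ν, hν⟩ := ⟨inferInstance⟩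
  ((hφ.min measurable_const).stronglyMeasurable.integral_kernel_prod_right
    (κ := ⟨ν, hν⟩)).measurable

theorem truncatedYoungAverage_nonneg (hφ0 : ∀ z l, 0 ≤ φ z l) {R : ℝ} (hR : 0 ≤ R) (z : Z) :
    0 ≤ truncatedYoungAverage ν φ R z :=
  integral_nonneg fun l => le_min (hφ0 z l) hR

theorem truncatedYoungAverage_le [∀ z, IsProbabilityMeasure (ν z)] (hφ0 : ∀ z l, 0 ≤ φ z l)
    {R : ℝ} (hR : 0 ≤ R) (z : Z) : truncatedYoungAverage ν φ R z ≤ R := by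
  calc truncatedYoungAverage ν φ R z ≤ ∫ _, R ∂ν z :=
        integral_mono_of_nonneg (.of_forall fun l => le_min (hφ0 z l) hR) (integrable_const R)
          (.of_forall fun l => min_le_right _ _)
    _ = R := by simp

theorem monotone_truncatedYoungAverage [∀ z, IsFiniteMeasure (ν z)] (hφ0 : ∀ z l, 0 ≤ φ z l)
    (hφ : ∀ z, Measurable (φ z)) (z : Z) : Monotone (truncatedYoungAverage ν φ · z) := by
  have hint : ∀ R : ℝ, Integrable (fun l => min (φ z l) R) (ν z) := fun R =>
    (integrable_const |R|).mono' ((hφ z).min measurable_const).aestronglyMeasurable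
      (.of_forall fun l => abs_le.2 ⟨le_min (by linarith [abs_nonneg R, hφ0 z l]) (neg_abs_le R),
        (min_le_right _ _).trans (le_abs_self R)⟩)
  exact fun R R' h => integral_mono (hint R) (hint R') fun l => min_le_min_left _ h

theorem withDensity_iSup_truncatedYoungAverage_le [TopologicalSpace Z]
    [TopologicalSpace.PseudoMetrizableSpace Z] [MeasurableSpace Z] [BorelSpace Z]
    {μ : Measure Z} [IsFiniteMeasure μ] (hν : Measurable ν) [∀ z, IsProbabilityMeasure (ν z)]
    (hφ : Measurable (Function.uncurry φ)) (hφ0 : ∀ z l, 0 ≤ φ z l)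
    {u : ℕ → Z → ℝ} (hu : ∀ n, Integrable (u n) μ) (hu0 : ∀ n z, 0 ≤ u n z)
    (hYoung : ∀ (R : ℕ) (f : Z →ᵇ ℝ≥0), Tendsto (fun n => ∫ z, min (u n z) R * f z ∂μ) atTop
      (𝓝 (∫ z, truncatedYoungAverage ν φ R z * f z ∂μ)))
    {σ : Measure Z} [IsFiniteMeasure σ]
    (hσ : ∀ f : Z →ᵇ ℝ≥0, Tendsto (fun n => ∫ z, u n z * f z ∂μ) atTop (𝓝 (∫ z, (f z : ℝ) ∂σ))) :
    μ.withDensity (fun z => ⨆ R : ℕ, ENNReal.ofReal (truncatedYoungAverage ν φ R z)) ≤ σ := by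
  refine Measure.withDensity_iSup_ofReal_le (fun R => measurable_truncatedYoungAverage hν hφ R)
    (fun R => truncatedYoungAverage_nonneg hφ0 R.cast_nonneg)
    (fun R => ⟨R, truncatedYoungAverage_le hφ0 R.cast_nonneg⟩)
    (fun z R R' h => monotone_truncatedYoungAverage hφ0 (fun _ => hφ.of_uncurry_left) z
      (Nat.cast_le.2 h)) fun R f => ?_
  exact le_of_tendsto_of_tendsto' (hYoung R f) (hσ f) fun n =>
    integral_mono_of_nonneg
      (.of_forall fun z => mul_nonneg (le_min (hu0 n z) R.cast_nonneg) (f z).2)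
      ((hu n).mul_bdd (by fun_prop) (.of_forall fun z => by
        simpa using NNReal.coe_le_coe.2 (NNReal.upper_bound f z)))
      (.of_forall fun z => mul_le_mul_of_nonneg_right (min_le_left _ _) (f z).2)

end YoungMeasure

end MeasureTheory

theorem young_measure_representation_with_concentration_general
    {m : ℕ} {E : Type*} [NormedAddCommGroup E] [NormedSpace ℝ E]
    [FiniteDimensional ℝ E] [MeasurableSpace E] [BorelSpace E]
    (Q : Set (EuclideanSpace ℝ (Fin m))) (hQb : Bornology.IsBounded Q)
    (φ : EuclideanSpace ℝ (Fin m) → E → ℝ)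
    (hφm : ∀ lam : E, Measurable (fun z => φ z lam))
    (hφc : ∀ z, Continuous (fun lam => φ z lam))
    (hφpos : ∀ z lam, 0 ≤ φ z lam)
    (F : ℕ → EuclideanSpace ℝ (Fin m) → E)
    (hFm : ∀ n, Measurable (F n))
    (hbound : ∃ C : ℝ≥0∞, C < ⊤ ∧ ∀ n,
      (∫⁻ z in Q, ENNReal.ofReal (φ z (F n z))) ≤ C)
    (ν : EuclideanSpace ℝ (Fin m) → Measure E)
    (hνm : Measurable ν)
    (hνp : ∀ z, IsProbabilityMeasure (ν z))
    (hYoung : ∀ h : EuclideanSpace ℝ (Fin m) → E → ℝ,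
      (∀ lam, Measurable fun z => h z lam) → (∀ z, Continuous fun lam => h z lam) →
      (∃ C : ℝ, ∀ z lam, |h z lam| ≤ C) →
      ∀ ψ : EuclideanSpace ℝ (Fin m) → ℝ, Integrable ψ (volume.restrict Q) →
        Filter.Tendsto (fun n => ∫ z in Q, h z (F n z) * ψ z) Filter.atTop
          (nhds (∫ z in Q, (∫ lam, h z lam ∂(ν z)) * ψ z)))
    (φbar : EuclideanSpace ℝ (Fin m) → ℝ≥0∞)
    (hφbar : ∀ z, φbar z = ⨆ R : ℕ, ENNReal.ofReal (∫ lam, min (φ z lam) (R : ℝ) ∂(ν z))) :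
    (∀ᵐ z ∂(volume.restrict Q), φbar z < ⊤) ∧
    Integrable (fun z => (φbar z).toReal) (volume.restrict Q) ∧
    ∃ nk : ℕ → ℕ, StrictMono nk ∧
      ∃ μ : Measure (EuclideanSpace ℝ (Fin m)), IsFiniteMeasure μ ∧
        μ (closure Q)ᶜ = 0 ∧
        ∀ ψ : EuclideanSpace ℝ (Fin m) → ℝ, Continuous ψ →
          Filter.Tendsto (fun k => ∫ z in Q, φ z (F (nk k) z) * ψ z) Filter.atTop
            (nhds ((∫ z in Q, (φbar z).toReal * ψ z) + ∫ x, ψ x ∂μ)) := by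
  obtain ⟨C, hC, hCb⟩ := hbound
  have hφ : Measurable (Function.uncurry φ) :=
    (measurable_uncurry_of_continuous_of_measurable hφc hφm).comp measurable_swap
  have hu (n : ℕ) : Measurable fun z => φ z (F n z) := hφ.comp (measurable_id.prodMk (hFm n))
  have : IsFiniteMeasure (volume.restrict Q) := isFiniteMeasure_restrict.2 hQb.measure_lt_top.ne
  obtain ⟨σ, _, hσQ, nk, hnk, hlim⟩ := exists_subseq_tendsto_integral_mul_of_lintegral_le
    hQb.isCompact_closure (Measure.restrict_compl_closure_eq_zero _ Q) hu (fun n z => hφpos _ _) hC hCb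
  have hYoung_trunc (R : ℕ) (f : EuclideanSpace ℝ (Fin m) →ᵇ ℝ≥0) :=
    (hYoung (fun z l => min (φ z l) R) (fun l => (hφm l).min measurable_const)
      (fun z => (hφc z).min continuous_const) ⟨R, fun z l => by
        rw [abs_of_nonneg (le_min (hφpos z l) R.cast_nonneg)]; exact min_le_right _ _⟩
      _ (integrable_of_nnreal _ f)).comp hnk.tendsto_atTop
  have hρ : (volume.restrict Q).withDensity φbar ≤ σ := funext hφbar ▸
    withDensity_iSup_truncatedYoungAverage_le hνm hφ hφpos
      (fun k => (lintegral_ofReal_ne_top_iff_integrable (hu _).aestronglyMeasurable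
        (.of_forall fun z => hφpos _ _)).1 ((hCb _).trans_lt hC).ne)
      (fun k z => hφpos _ _) hYoung_trunc (fun f => hlim _ (by fun_prop))
  have hφbar_meas : Measurable φbar := funext hφbar ▸
    .iSup fun R => (measurable_truncatedYoungAverage hνm hφ R).ennreal_ofReal
  have hφbar_fin : ∫⁻ z in Q, φbar z ≠ ∞ := by
    simpa using ((hρ Set.univ).trans_lt (measure_lt_top σ _)).ne
  have hφbar_ae := ae_lt_top hφbar_meas hφbar_fin
  refine ⟨hφbar_ae, integrable_toReal_of_lintegral_ne_top hφbar_meas.aemeasurable hφbar_fin,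
    nk, hnk, σ - (volume.restrict Q).withDensity φbar, inferInstance,
    Measure.absolutelyContinuous_of_le Measure.sub_le hσQ, fun ψ hψ => ?_⟩
  simpa [integral_eq_integral_add_integral_sub_of_le hρ
      (hψ.integrable_of_measure_compl_eq_zero hQb.isCompact_closure hσQ),
    integral_withDensity_eq_integral_toReal_smul hφbar_meas hφbar_ae] using hlim ψ hψ

/-- Representation of weak limits of nonnegative Carathéodory integrands of uniformly
`L¹`-bounded compositions: the weak-* limit in measures of `φ(·,Fⁿ(·))` along a
subsequence equals the Young-measure average `z ↦ ∫ φ(z,λ) dν_z(λ)` (defined as the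
monotone limit of the truncated integrals, and belonging to `L¹(Q)`) plus a nonnegative
finite concentration measure `μ` supported in the closure of `Q`. -/
theorem young_measure_representation_with_concentration
    {m : ℕ} {E : Type*} [NormedAddCommGroup E] [NormedSpace ℝ E]
    [FiniteDimensional ℝ E] [MeasurableSpace E] [BorelSpace E]
    (Q : Set (EuclideanSpace ℝ (Fin m))) (hQb : Bornology.IsBounded Q)
    (hQm : MeasurableSet Q) (hQfin : volume Q < ⊤)
    (φ : EuclideanSpace ℝ (Fin m) → E → ℝ)
    (hφm : ∀ lam : E, Measurable (fun z => φ z lam))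
    (hφc : ∀ z, Continuous (fun lam => φ z lam))
    (hφpos : ∀ z lam, 0 ≤ φ z lam)
    (F : ℕ → EuclideanSpace ℝ (Fin m) → E)
    (hFm : ∀ n, Measurable (F n))
    (hbound : ∃ C : ℝ≥0∞, C < ⊤ ∧ ∀ n,
      (∫⁻ z in Q, ENNReal.ofReal (φ z (F n z))) ≤ C)
    (ν : EuclideanSpace ℝ (Fin m) → Measure E)
    (hνm : Measurable ν)
    (hνp : ∀ z, IsProbabilityMeasure (ν z))
    (hYoung : ∀ h : EuclideanSpace ℝ (Fin m) → E → ℝ,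
      (∀ lam, Measurable fun z => h z lam) → (∀ z, Continuous fun lam => h z lam) →
      (∃ C : ℝ, ∀ z lam, |h z lam| ≤ C) →
      ∀ ψ : EuclideanSpace ℝ (Fin m) → ℝ, Integrable ψ (volume.restrict Q) →
        Filter.Tendsto (fun n => ∫ z in Q, h z (F n z) * ψ z) Filter.atTop
          (nhds (∫ z in Q, (∫ lam, h z lam ∂(ν z)) * ψ z)))
    (φbar : EuclideanSpace ℝ (Fin m) → ℝ≥0∞)
    (hφbar : ∀ z, φbar z = ⨆ R : ℕ, ENNReal.ofReal (∫ lam, min (φ z lam) (R : ℝ) ∂(ν z))) :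
    (∀ᵐ z ∂(volume.restrict Q), φbar z < ⊤) ∧
    Integrable (fun z => (φbar z).toReal) (volume.restrict Q) ∧
    ∃ nk : ℕ → ℕ, StrictMono nk ∧
      ∃ μ : Measure (EuclideanSpace ℝ (Fin m)), IsFiniteMeasure μ ∧
        μ (closure Q)ᶜ = 0 ∧
        ∀ ψ : EuclideanSpace ℝ (Fin m) → ℝ, Continuous ψ →
          Filter.Tendsto (fun k => ∫ z in Q, φ z (F (nk k) z) * ψ z) Filter.atTop
            (nhds ((∫ z in Q, (φbar z).toReal * ψ z) + ∫ x, ψ x ∂μ)) :=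
  young_measure_representation_with_concentration_general Q hQb φ hφm hφc hφpos F hFm hbound ν hνm
    hνp hYoung φbar hφbar
end

section
/- Let d ≥ 1, let D be an open convex subset of the d×d real matrices, and let W : D → ℝ be twice continuously differentiable. Let a, b ∈ ℝ^d, let ν ∈ ℝ^d be a unit vector, let F₋ be a d×d matrix and t > 0 be such that the segment { t·F₋ + s·t·((b−a) ⊗ ν) : s ∈ [0,1] } is contained in D. Suppose that condition (C) holds: for each i = 1,…,d, Σ_α ( ∂W/∂F_{iα}(t·F₋ + t·(b−a)⊗ν) − ∂W/∂F_{iα}(t·F₋) ) ν_α + (b−a)_i = 0. If W is rank-one convex on D, i.e. Σ_{i,j,α,β} ∂²W/∂F_{iα}∂F_{jβ}(F) ν_α ν_β ξ_i ξ_j > 0 for every F ∈ D, every nonzero ξ ∈ ℝ^d and every unit vector ν ∈ ℝ^d, then a = b. Equivalently, if condition (C) holds with a ≠ b, then rank-one convexity of W is violated on D. -/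
/-!
Put `ξ = b - a` and `V = ξ ⊗ ν`. Pairing (C) with `ξ` shows that `X ↦ DW(X)[V]` drops by
`|ξ|²` along the segment from `tF₋` to `tF₋ + tV`. By the mean value theorem this drop equals
`t · D²W(F)[V, V]` for some `F` on the segment, which rank-one convexity makes positive.
-/

open Set

section Expansion

variable {ι κ R : Type*} [Fintype ι] [Fintype κ] [DecidableEq ι] [DecidableEq κ]

theorem pi_pi_eq_sum_single [Semiring R] (x : ι → κ → R) :
    x = ∑ i, ∑ α, x i α • (Pi.single i (Pi.single α 1) : ι → κ → R) := by
  ext i α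
  simp [Finset.sum_apply, Pi.single_apply, ite_apply]

theorem map_eq_sum_single {F M : Type*} [Semiring R] [AddCommMonoid M] [Module R M]
    [FunLike F (ι → κ → R) M] [LinearMapClass F R (ι → κ → R) M]
    (L : F) (x : ι → κ → R) :
    L x = ∑ i, ∑ α, x i α • L (Pi.single i (Pi.single α 1)) := by
  conv_lhs => rw [pi_pi_eq_sum_single x]
  simp only [map_sum, map_smul]

theorem apply_rankOne_rankOne {𝕜 : Type*} [NontriviallyNormedField 𝕜]
    (B : (ι → κ → 𝕜) →L[𝕜] (ι → κ → 𝕜) →L[𝕜] 𝕜) (ξ : ι → 𝕜) (η : κ → 𝕜) :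
    B (fun i α => ξ i * η α) (fun i α => ξ i * η α) =
      ∑ i, ∑ j, ∑ α, ∑ β, B (Pi.single i (Pi.single α 1)) (Pi.single j (Pi.single β 1)) *
        η α * η β * ξ i * ξ j := by
  rw [map_eq_sum_single B]
  simp only [_root_.sum_apply, smul_apply,
    map_eq_sum_single (B _) (fun i α => ξ i * η α), smul_eq_mul, Finset.mul_sum]
  refine Finset.sum_congr rfl fun i _ => ?_
  rw [Finset.sum_comm]
  refine Finset.sum_congr rfl fun j _ => Finset.sum_congr rfl fun α _ =>
    Finset.sum_congr rfl fun β _ => ?_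
  ring

theorem map_rankOne_sub_eq_neg_sum_sq_of_jump {F : Type*} [CommRing R]
    [FunLike F (ι → κ → R) R] [LinearMapClass F R (ι → κ → R) R] {L₀ L₁ : F}
    {ξ : ι → R} {η : κ → R}
    (hjump : ∀ i,
      (∑ α, (L₁ (Pi.single i (Pi.single α 1)) - L₀ (Pi.single i (Pi.single α 1))) * η α)
        + ξ i = 0) :
    L₁ (fun i α => ξ i * η α) - L₀ (fun i α => ξ i * η α) = -∑ i, ξ i ^ 2 := by
  rw [map_eq_sum_single L₁, map_eq_sum_single L₀, ← Finset.sum_sub_distrib,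
    ← Finset.sum_neg_distrib]
  refine Finset.sum_congr rfl fun i _ => ?_
  have hi : ∑ α, (L₁ (Pi.single i (Pi.single α 1)) - L₀ (Pi.single i (Pi.single α 1))) *
      η α = -ξ i := eq_neg_of_add_eq_zero_left (hjump i)
  rw [← Finset.sum_sub_distrib, sq, neg_mul_eq_mul_neg, ← hi, Finset.mul_sum]
  exact Finset.sum_congr rfl fun α _ => by ring

end Expansion

theorem exists_sub_eq_fderiv_segment {E : Type*} [NormedAddCommGroup E] [NormedSpace ℝ E]
    {φ : E → ℝ} {x h : E}
    (hφ : ∀ s ∈ Icc (0 : ℝ) 1, DifferentiableAt ℝ φ (x + s • h)) :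
    ∃ c ∈ Ioo (0 : ℝ) 1, φ (x + h) - φ x = fderiv ℝ φ (x + c • h) h := by
  have hline : ∀ s ∈ Icc (0 : ℝ) 1,
      HasDerivAt (fun s => φ (x + s • h)) (fderiv ℝ φ (x + s • h) h) s := fun s hs =>
    have hmove : HasDerivAt (fun s : ℝ => x + s • h) h s := by
      simpa using ((hasDerivAt_id s).smul_const h).const_add x
    (hφ s hs).hasFDerivAt.comp_hasDerivAt s hmove
  obtain ⟨c, hc, hslope⟩ := exists_hasDerivAt_eq_slope (fun s => φ (x + s • h)) _ one_pos
    (fun s hs => (hline s hs).continuousAt.continuousWithinAt)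
    (fun s hs => hline s (Ioo_subset_Icc_self hs))
  exact ⟨c, hc, by simpa using hslope.symm⟩

theorem fderiv_clm_apply_const_apply {𝕜 E F G : Type*} [NontriviallyNormedField 𝕜]
    [NormedAddCommGroup E] [NormedSpace 𝕜 E] [NormedAddCommGroup F] [NormedSpace 𝕜 F]
    [NormedAddCommGroup G] [NormedSpace 𝕜 G] {c : E → F →L[𝕜] G} {x : E}
    (hc : DifferentiableAt 𝕜 c x) (v : F) (u : E) :
    fderiv 𝕜 (fun y => c y v) x u = fderiv 𝕜 c x u v := by
  rw [fderiv_clm_apply hc (differentiableAt_const v)]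
  simp

theorem jump_condition_contradicts_rank_one_convexity_general
    {d : ℕ}
    (D : Set (Fin d → Fin d → ℝ)) (hDo : IsOpen D)
    (W : (Fin d → Fin d → ℝ) → ℝ) (hW : ContDiffOn ℝ 2 W D)
    (a b ν : Fin d → ℝ) (hν : ∑ α, ν α ^ 2 = 1)
    (Fm : Fin d → Fin d → ℝ) (t : ℝ) (ht : 0 < t)
    (hseg : ∀ s ∈ Set.Icc (0 : ℝ) 1,
      (fun i α => t * Fm i α + s * t * ((b i - a i) * ν α)) ∈ D)
    (hC : ∀ i, (∑ α,
        (fderiv ℝ W (fun i' α' => t * Fm i' α' + t * ((b i' - a i') * ν α'))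
            (Pi.single i (Pi.single α 1))
          - fderiv ℝ W (fun i' α' => t * Fm i' α') (Pi.single i (Pi.single α 1))) * ν α)
        + (b i - a i) = 0)
    (hROC : ∀ F ∈ D, ∀ ξ : Fin d → ℝ, ξ ≠ 0 → ∀ η : Fin d → ℝ, ∑ α, η α ^ 2 = 1 →
      0 < ∑ i, ∑ j, ∑ α, ∑ β,
        (fderiv ℝ (fun X => fderiv ℝ W X (Pi.single j (Pi.single β 1))) F
          (Pi.single i (Pi.single α 1))) * η α * η β * ξ i * ξ j) :
    a = b := by
  by_contra hab
  set ξ : Fin d → ℝ := fun i => b i - a i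
  have hξ : ξ ≠ 0 := fun h => hab (funext fun i => (sub_eq_zero.mp (congrFun h i)).symm)
  set V : Fin d → Fin d → ℝ := fun i α => ξ i * ν α
  set x : Fin d → Fin d → ℝ := fun i α => t * Fm i α
  have hxD : ∀ s ∈ Icc (0 : ℝ) 1, x + s • t • V ∈ D := fun s hs => by
    convert hseg s hs using 1
    ext i α
    simp only [Pi.add_apply, Pi.smul_apply, smul_eq_mul, x, V, ξ]
    ring
  have hDW : ∀ X ∈ D, DifferentiableAt ℝ (fderiv ℝ W) X := fun X hX =>
    ((hW.fderiv_of_isOpen hDo le_rfl).contDiffAt (hDo.mem_nhds hX)).differentiableAt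
      one_ne_zero
  obtain ⟨c, hc, hmvt⟩ := exists_sub_eq_fderiv_segment (φ := fun X => fderiv ℝ W X V)
    fun s hs => (hDW _ (hxD s hs)).clm_apply (differentiableAt_const V)
  set F := x + c • t • V
  have hF : F ∈ D := hxD c (Ioo_subset_Icc_self hc)
  have hjump : fderiv ℝ W (x + t • V) V - fderiv ℝ W x V = -∑ i, ξ i ^ 2 :=
    map_rankOne_sub_eq_neg_sum_sq_of_jump hC
  have hsecond : fderiv ℝ (fun X => fderiv ℝ W X V) F (t • V) = t * ∑ i, ∑ j, ∑ α, ∑ β,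
      (fderiv ℝ (fun X => fderiv ℝ W X (Pi.single j (Pi.single β 1))) F
        (Pi.single i (Pi.single α 1))) * ν α * ν β * ξ i * ξ j := by
    rw [fderiv_clm_apply_const_apply (hDW F hF), map_smul, smul_apply, smul_eq_mul,
      apply_rankOne_rankOne]
    simp only [fderiv_clm_apply_const_apply (hDW F hF)]
  have hpos := mul_pos ht (hROC F hF ξ hξ ν hν)
  rw [← hsecond, ← hmvt, hjump] at hpos
  linarith [Finset.sum_nonneg fun i (_ : i ∈ Finset.univ) => sq_nonneg (ξ i)]

/-- If the equilibrium jump condition (C) for a standing phase interface with normal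
`ν` joining the deformation gradients `tF₋` and `tF₋ + t(b−a)⊗ν` holds, and the stored
energy `W` is rank-one convex on the open convex set `D` containing the segment between
these gradients, then `a = b` (so a genuine jump violates rank-one convexity). -/
theorem jump_condition_contradicts_rank_one_convexity
    {d : ℕ} (hd : 1 ≤ d)
    (D : Set (Fin d → Fin d → ℝ)) (hDo : IsOpen D) (hDc : Convex ℝ D)
    (W : (Fin d → Fin d → ℝ) → ℝ) (hW : ContDiffOn ℝ 2 W D)
    (a b ν : Fin d → ℝ) (hν : ∑ α, ν α ^ 2 = 1)
    (Fm : Fin d → Fin d → ℝ) (t : ℝ) (ht : 0 < t)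
    (hseg : ∀ s ∈ Set.Icc (0 : ℝ) 1,
      (fun i α => t * Fm i α + s * t * ((b i - a i) * ν α)) ∈ D)
    (hC : ∀ i, (∑ α,
        (fderiv ℝ W (fun i' α' => t * Fm i' α' + t * ((b i' - a i') * ν α'))
            (Pi.single i (Pi.single α 1))
          - fderiv ℝ W (fun i' α' => t * Fm i' α') (Pi.single i (Pi.single α 1))) * ν α)
        + (b i - a i) = 0)
    (hROC : ∀ F ∈ D, ∀ ξ : Fin d → ℝ, ξ ≠ 0 → ∀ η : Fin d → ℝ, ∑ α, η α ^ 2 = 1 →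
      0 < ∑ i, ∑ j, ∑ α, ∑ β,
        (fderiv ℝ (fun X => fderiv ℝ W X (Pi.single j (Pi.single β 1))) F
          (Pi.single i (Pi.single α 1))) * η α * η β * ξ i * ξ j) :
    a = b :=
  jump_condition_contradicts_rank_one_convexity_general D hDo W hW a b ν hν Fm t ht hseg hC hROC
end

section
/- Let S : ℝ → ℝ be convex and continuously differentiable with bounded derivative, and let α ∈ ℝ. Let f ∈ L¹(ℝ) satisfy 0 ≤ f(ξ) ≤ 1 for almost every ξ > 0, −1 ≤ f(ξ) ≤ 0 for almost every ξ < 0, and ∫_ℝ f(ξ) dξ = α. Then ∫_ℝ S′(ξ) f(ξ) dξ ≥ ∫_ℝ S′(ξ) χ(ξ, α) dξ = S(α) − S(0). Moreover, if S is strictly convex and equality holds, then f(ξ) = χ(ξ, α) for almost every ξ ∈ ℝ. -/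
/-!
Put `c = S'(α)`. The constraints on `f` force `f(ξ) - χ(ξ,α)` to have the sign of `ξ - α`
(for `ξ ≠ 0`), and `S'` is monotone, so `(S'(ξ) - c) (f(ξ) - χ(ξ,α)) ≥ 0` almost everywhere.
Because `∫ f = α = ∫ χ(·,α)`, the integral of this product is
`∫ S' f - ∫ S' χ(·,α)`, while `∫ S' χ(·,α) = ∫₀^α S' = S(α) - S(0)`. In the case of equality
the product vanishes almost everywhere, and for strictly convex `S` the factor `S'(ξ) - c`
vanishes only at `ξ = α`.
-/

open MeasureTheory

noncomputable def kineticChi (ξ u : ℝ) : ℝ :=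
  if 0 < ξ ∧ ξ < u then 1 else if u < ξ ∧ ξ < 0 then -1 else 0

section Kinetic

variable {α ξ y : ℝ}

lemma kineticChi_le_of_lt (h : α < ξ) (hξ : ξ ≠ 0) (hpos : 0 < ξ → 0 ≤ y ∧ y ≤ 1)
    (hneg : ξ < 0 → -1 ≤ y ∧ y ≤ 0) : kineticChi ξ α ≤ y := by
  unfold kineticChi
  split_ifs with h₁ h₂
  · linarith [h₁.2]
  · linarith [hneg h₂.2]
  · rcases hξ.lt_or_gt with hξ | hξ
    · exact absurd ⟨h, hξ⟩ h₂
    · linarith [hpos hξ]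

lemma le_kineticChi_of_lt (h : ξ < α) (hξ : ξ ≠ 0) (hpos : 0 < ξ → 0 ≤ y ∧ y ≤ 1)
    (hneg : ξ < 0 → -1 ≤ y ∧ y ≤ 0) : y ≤ kineticChi ξ α := by
  unfold kineticChi
  split_ifs with h₁ h₂
  · linarith [hpos h₁.1]
  · linarith [h₂.1]
  · rcases hξ.lt_or_gt with hξ | hξ
    · linarith [hneg hξ]
    · exact absurd ⟨hξ, h⟩ h₁

lemma mul_sub_kineticChi_nonneg {g : ℝ → ℝ} (hg : Monotone g) (hξ : ξ ≠ 0)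
    (hpos : 0 < ξ → 0 ≤ y ∧ y ≤ 1) (hneg : ξ < 0 → -1 ≤ y ∧ y ≤ 0) :
    0 ≤ (g ξ - g α) * (y - kineticChi ξ α) := by
  rcases lt_trichotomy ξ α with h | rfl | h
  · exact mul_nonneg_of_nonpos_of_nonpos (sub_nonpos.2 (hg h.le))
      (sub_nonpos.2 (le_kineticChi_of_lt h hξ hpos hneg))
  · simp
  · exact mul_nonneg (sub_nonneg.2 (hg h.le))
      (sub_nonneg.2 (kineticChi_le_of_lt h hξ hpos hneg))

lemma mul_kineticChi_of_nonneg (g : ℝ → ℝ) (hα : 0 ≤ α) :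
    (fun ξ => g ξ * kineticChi ξ α) = (Set.Ioo 0 α).indicator g := by
  ext ξ
  have : ¬(α < ξ ∧ ξ < 0) := fun h => by linarith [h.1, h.2]
  by_cases h : 0 < ξ ∧ ξ < α <;> simp [kineticChi, Set.indicator, h, this]

lemma mul_kineticChi_of_nonpos (g : ℝ → ℝ) (hα : α ≤ 0) :
    (fun ξ => g ξ * kineticChi ξ α) = (Set.Ioo α 0).indicator (-g) := by
  ext ξ
  have : ¬(0 < ξ ∧ ξ < α) := fun h => by linarith [h.1, h.2]
  by_cases h : α < ξ ∧ ξ < 0 <;> simp [kineticChi, Set.indicator, h, this]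

end Kinetic

section Integrals

variable {g f : ℝ → ℝ} {α : ℝ}

lemma integrable_mul_kineticChi (hg : IntervalIntegrable g volume 0 α) :
    Integrable (fun ξ => g ξ * kineticChi ξ α) := by
  rcases le_total 0 α with hα | hα
  · rw [mul_kineticChi_of_nonneg g hα, integrable_indicator_iff measurableSet_Ioo]
    exact ((intervalIntegrable_iff_integrableOn_Ioo_of_le hα).1 hg)
  · rw [mul_kineticChi_of_nonpos g hα, integrable_indicator_iff measurableSet_Ioo]
    exact ((intervalIntegrable_iff_integrableOn_Ioo_of_le hα).1 hg.symm).neg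

lemma integral_mul_kineticChi (g : ℝ → ℝ) (α : ℝ) :
    ∫ ξ, g ξ * kineticChi ξ α = ∫ x in 0..α, g x := by
  rcases le_total 0 α with hα | hα
  · rw [mul_kineticChi_of_nonneg g hα, integral_indicator measurableSet_Ioo,
      intervalIntegral.integral_of_le hα, integral_Ioc_eq_integral_Ioo]
  · rw [mul_kineticChi_of_nonpos g hα, integral_indicator measurableSet_Ioo,
      intervalIntegral.integral_symm, intervalIntegral.integral_of_le hα,
      integral_Ioc_eq_integral_Ioo, ← integral_neg]
    rfl

lemma integrable_kineticChi (α : ℝ) : Integrable (fun ξ => kineticChi ξ α) := by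
  simpa using integrable_mul_kineticChi (g := 1) (intervalIntegrable_const (c := 1))

lemma integral_kineticChi (α : ℝ) : ∫ ξ, kineticChi ξ α = α := by
  simpa using integral_mul_kineticChi 1 α

lemma integral_deriv_mul_kineticChi {S : ℝ → ℝ} (hS : ContDiff ℝ 1 S) (α : ℝ) :
    ∫ ξ, deriv S ξ * kineticChi ξ α = S α - S 0 := by
  rw [integral_mul_kineticChi]
  exact intervalIntegral.integral_deriv_eq_sub (fun x _ => hS.differentiable one_ne_zero x)
    ((hS.continuous_deriv le_rfl).intervalIntegrable 0 α)

end Integrals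

section Minimization

variable {g f : ℝ → ℝ} {α C : ℝ}

lemma integrable_mul_sub_kineticChi (hg : Continuous g) (hgC : ∀ ξ, |g ξ| ≤ C)
    (hf : Integrable f) :
    Integrable fun ξ => (g ξ - g α) * (f ξ - kineticChi ξ α) := by
  simp_rw [sub_mul]
  exact ((hf.sub (integrable_kineticChi α)).bdd_mul hg.aestronglyMeasurable
    (.of_forall hgC)).sub ((hf.sub (integrable_kineticChi α)).const_mul _)

lemma integral_mul_sub_kineticChi (hg : Continuous g) (hgC : ∀ ξ, |g ξ| ≤ C)
    (hf : Integrable f) (hint : ∫ ξ, f ξ = α) :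
    ∫ ξ, (g ξ - g α) * (f ξ - kineticChi ξ α) =
      (∫ ξ, g ξ * f ξ) - ∫ ξ, g ξ * kineticChi ξ α := by
  have hgf : Integrable fun ξ => g ξ * f ξ :=
    hf.bdd_mul hg.aestronglyMeasurable (.of_forall hgC)
  have hgχ := integrable_mul_kineticChi (hg.intervalIntegrable 0 α)
  have hfχ : Integrable fun ξ => f ξ - kineticChi ξ α := hf.sub (integrable_kineticChi α)
  calc ∫ ξ, (g ξ - g α) * (f ξ - kineticChi ξ α)
      = ∫ ξ, (g ξ * f ξ - g ξ * kineticChi ξ α) - g α * (f ξ - kineticChi ξ α) := by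
        congr 1; ext ξ; ring
    _ = (∫ ξ, g ξ * f ξ) - (∫ ξ, g ξ * kineticChi ξ α)
          - g α * ((∫ ξ, f ξ) - ∫ ξ, kineticChi ξ α) := by
        rw [integral_sub (by exact hgf.sub hgχ) (hfχ.const_mul _), integral_sub hgf hgχ,
          integral_const_mul, integral_sub hf (integrable_kineticChi α)]
    _ = (∫ ξ, g ξ * f ξ) - ∫ ξ, g ξ * kineticChi ξ α := by
        rw [hint, integral_kineticChi, sub_self, mul_zero, sub_zero]

lemma ae_mul_sub_kineticChi_nonneg (hg : Monotone g)
    (hpos : ∀ᵐ ξ : ℝ, 0 < ξ → 0 ≤ f ξ ∧ f ξ ≤ 1)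
    (hneg : ∀ᵐ ξ : ℝ, ξ < 0 → -1 ≤ f ξ ∧ f ξ ≤ 0) :
    ∀ᵐ ξ : ℝ, 0 ≤ (g ξ - g α) * (f ξ - kineticChi ξ α) := by
  filter_upwards [hpos, hneg, volume.ae_ne 0] with ξ hp hn hξ
  exact mul_sub_kineticChi_nonneg hg hξ hp hn

lemma ae_eq_kineticChi_of_strictMono (hg : StrictMono g)
    (h : (fun ξ => (g ξ - g α) * (f ξ - kineticChi ξ α)) =ᵐ[volume] 0) :
    f =ᵐ[volume] fun ξ => kineticChi ξ α := by
  filter_upwards [h, volume.ae_ne α] with ξ hξ hξα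
  have hgξ : g ξ - g α ≠ 0 := sub_ne_zero.2 (hg.injective.ne hξα)
  exact sub_eq_zero.1 ((mul_eq_zero.1 hξ).resolve_left hgξ)

end Minimization

/-- Brenier's minimization principle: over the class of `f ∈ L¹(ℝ)` with
`0 ≤ f ≤ 1` on `(0,∞)`, `−1 ≤ f ≤ 0` on `(−∞,0)` and `∫ f = α`, the kinetic function
`χ(·,α)` minimizes `f ↦ ∫ S′(ξ)f(ξ)dξ` for every convex `C¹` function `S` with bounded
derivative, the minimum value being `S(α) − S(0)`; for strictly convex `S` the minimizer
is unique (almost everywhere). -/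
theorem brenier_kinetic_minimization
    (S : ℝ → ℝ) (hconv : ConvexOn ℝ Set.univ S) (hS : ContDiff ℝ 1 S)
    (hbd : ∃ C : ℝ, ∀ ξ : ℝ, |deriv S ξ| ≤ C)
    (α : ℝ) (f : ℝ → ℝ) (hf : Integrable f)
    (hpos : ∀ᵐ ξ : ℝ, 0 < ξ → 0 ≤ f ξ ∧ f ξ ≤ 1)
    (hneg : ∀ᵐ ξ : ℝ, ξ < 0 → -1 ≤ f ξ ∧ f ξ ≤ 0)
    (hint : ∫ ξ : ℝ, f ξ = α) :
    (∫ ξ : ℝ, deriv S ξ * kineticChi ξ α) = S α - S 0 ∧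
    S α - S 0 ≤ ∫ ξ : ℝ, deriv S ξ * f ξ ∧
    (StrictConvexOn ℝ Set.univ S → (∫ ξ : ℝ, deriv S ξ * f ξ) = S α - S 0 →
      f =ᵐ[volume] fun ξ => kineticChi ξ α) := by
  obtain ⟨C, hC⟩ := hbd
  have hdiff : Differentiable ℝ S := hS.differentiable one_ne_zero
  have hcont : Continuous (deriv S) := hS.continuous_deriv le_rfl
  have hmono : Monotone (deriv S) :=
    monotoneOn_univ.1 (hconv.monotoneOn_deriv fun x _ => hdiff x)
  have hχ := integral_deriv_mul_kineticChi hS α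
  have hgap := integral_mul_sub_kineticChi hcont hC hf hint
  have hgap_nonneg := ae_mul_sub_kineticChi_nonneg (α := α) hmono hpos hneg
  refine ⟨hχ, by linarith [integral_nonneg_of_ae hgap_nonneg], fun hstrict heq => ?_⟩
  have hsmono : StrictMono (deriv S) :=
    strictMonoOn_univ.1 (hstrict.strictMonoOn_deriv fun x _ => hdiff x)
  refine ae_eq_kineticChi_of_strictMono hsmono ?_
  exact (integral_eq_zero_iff_of_nonneg_ae hgap_nonneg
    (integrable_mul_sub_kineticChi hcont hC hf)).1 (by linarith)
end

section
/- Let g₊ : ℝ → [0,1] be nonincreasing with lim_{ξ→−∞} g₊(ξ) = 1 and lim_{ξ→+∞} g₊(ξ) = 0, and let λ : ℝ → ℝ be continuous. Suppose that for all θ < ξ one has (λ(θ) − λ(ξ)) · g₊(ξ) · (1 − g₊(θ)) = 0. Let I = { ξ ∈ ℝ : 0 < g₊(ξ) < 1 }. Then either (i) I is an interval containing more than one point and λ is constant on I, or (ii) I contains at most one point and there exists a ∈ ℝ such that g₊(ξ) = 1 for ξ < a and g₊(ξ) = 0 for ξ > a. -/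
/-- Key deduction in the kinetic proof of Tartar's theorem: if `g₊ : ℝ → [0,1]` is
nonincreasing with limits `1` at `−∞` and `0` at `+∞`, `λ` is continuous, and
`(λ(θ) − λ(ξ)) g₊(ξ)(1 − g₊(θ)) = 0` for all `θ < ξ`, then on the set
`I = {0 < g₊ < 1}` either `I` is a nondegenerate interval on which `λ` is constant, or
`I` has at most one point and `g₊` is an indicator `1_{ξ < a}` away from one point. -/
theorem tartar_cancellation_of_oscillations
    (gp : ℝ → ℝ) (hmono : Antitone gp)
    (hrange : ∀ ξ, 0 ≤ gp ξ ∧ gp ξ ≤ 1)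
    (hbot : Filter.Tendsto gp Filter.atBot (nhds 1))
    (htop : Filter.Tendsto gp Filter.atTop (nhds 0))
    (lam : ℝ → ℝ) (hlam : Continuous lam)
    (hkey : ∀ θ ξ : ℝ, θ < ξ → (lam θ - lam ξ) * gp ξ * (1 - gp θ) = 0) :
    (Set.OrdConnected {ξ : ℝ | 0 < gp ξ ∧ gp ξ < 1} ∧
      ({ξ : ℝ | 0 < gp ξ ∧ gp ξ < 1}).Nontrivial ∧
      ∀ x ∈ {ξ : ℝ | 0 < gp ξ ∧ gp ξ < 1}, ∀ y ∈ {ξ : ℝ | 0 < gp ξ ∧ gp ξ < 1},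
        lam x = lam y) ∨
    (({ξ : ℝ | 0 < gp ξ ∧ gp ξ < 1}).Subsingleton ∧
      ∃ a : ℝ, (∀ ξ : ℝ, ξ < a → gp ξ = 1) ∧ (∀ ξ : ℝ, a < ξ → gp ξ = 0)) := by
  set I : Set ℝ := {ξ : ℝ | 0 < gp ξ ∧ gp ξ < 1} with hI
  -- key consequence: λ is constant on I
  have hconst : ∀ x ∈ I, ∀ y ∈ I, lam x = lam y := by
    intro x hx y hy
    rcases lt_trichotomy x y with h | h | h
    · have := hkey x y h
      have h1 : gp y ≠ 0 := ne_of_gt hy.1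
      have h2 : (1 : ℝ) - gp x ≠ 0 := by have := hx.2; intro hc; linarith
      have : lam x - lam y = 0 := by
        rcases mul_eq_zero.1 this with h' | h'
        · rcases mul_eq_zero.1 h' with h'' | h''
          · exact h''
          · exact absurd h'' h1
        · exact absurd h' h2
      linarith
    · rw [h]
    · have := hkey y x h
      have h1 : gp x ≠ 0 := ne_of_gt hx.1
      have h2 : (1 : ℝ) - gp y ≠ 0 := by have := hy.2; intro hc; linarith
      have : lam y - lam x = 0 := by
        rcases mul_eq_zero.1 this with h' | h'
        · rcases mul_eq_zero.1 h' with h'' | h''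
          · exact h''
          · exact absurd h'' h1
        · exact absurd h' h2
      linarith
  have hord : Set.OrdConnected I := by
    constructor
    intro x hx y hy z hz
    exact ⟨lt_of_lt_of_le hy.1 (hmono hz.2), lt_of_le_of_lt (hmono hz.1) hx.2⟩
  rcases I.subsingleton_or_nontrivial with hsub | hnt
  · -- subsingleton case
    right
    refine ⟨hsub, ?_⟩
    -- W = zero set of gp
    set W : Set ℝ := {ξ : ℝ | gp ξ = 0} with hW
    -- eventually gp < 1/2 at top
    have htop' : ∀ᶠ ξ in Filter.atTop, gp ξ < 1/2 := htop.eventually_lt_const (by norm_num)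
    obtain ⟨ξ₀, hξ₀⟩ := Filter.eventually_atTop.1 htop'
    have hbot' : ∀ᶠ ξ in Filter.atBot, 1/2 < gp ξ := hbot.eventually_const_lt (by norm_num)
    obtain ⟨ξ₁, hξ₁⟩ := Filter.eventually_atBot.1 hbot'
    have hWne : W.Nonempty := by
      by_contra hne
      have hpos : ∀ ξ, 0 < gp ξ := by
        intro ξ
        rcases (hrange ξ).1.lt_or_eq with h | h
        · exact h
        · exact absurd ⟨ξ, h.symm⟩ hne
      have h1 : ξ₀ ∈ I := ⟨hpos ξ₀, lt_trans (hξ₀ ξ₀ le_rfl) (by norm_num)⟩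
      have h2 : ξ₀ + 1 ∈ I := ⟨hpos _, lt_trans (hξ₀ (ξ₀+1) (by linarith)) (by norm_num)⟩
      have := hsub h1 h2
      linarith
    have hWbdd : BddBelow W := by
      refine ⟨ξ₁, fun w hw => ?_⟩
      by_contra hc
      push_neg at hc
      have := hξ₁ w hc.le
      rw [hw] at this
      linarith
    set a : ℝ := sInf W with ha
    refine ⟨a, ?_, ?_⟩
    · intro ξ hξ
      have hpos : ∀ η, η < a → 0 < gp η := by
        intro η hη
        rcases (hrange η).1.lt_or_eq with h | h
        · exact h
        · exact absurd (csInf_le hWbdd h.symm) (not_le.2 hη)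
      by_contra hne
      have hlt : gp ξ < 1 := lt_of_le_of_ne (hrange ξ).2 hne
      set ξ' : ℝ := (ξ + a) / 2 with hξ'
      have h1 : ξ < ξ' := by simp only [hξ']; linarith
      have h2 : ξ' < a := by simp only [hξ']; linarith
      have hξI : ξ ∈ I := ⟨hpos ξ hξ, hlt⟩
      have hξ'I : ξ' ∈ I := ⟨hpos ξ' h2, lt_of_le_of_lt (hmono h1.le) hlt⟩
      have := hsub hξI hξ'I
      linarith
    · intro ξ hξ
      obtain ⟨w, hw, hwξ⟩ := exists_lt_of_csInf_lt hWne hξ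
      have : gp ξ ≤ gp w := hmono hwξ.le
      rw [hw] at this
      exact le_antisymm this (hrange ξ).1
  · exact Or.inl ⟨hord, hnt, hconst⟩
end

section
/- Let T > 0, let σ, B : ℝ → ℝ be functions, and let g : [0,T] → ℝ be differentiable and satisfy, for all t ∈ [0,T], the two-sided differential inequality −B(g(t)) ≤ g′(t) + σ(g(t)) ≤ B(g(t)). Suppose M, m ∈ ℝ are such that m ≤ g(0) ≤ M, σ(ξ) − B(ξ) > 0 for every ξ ≥ M, and σ(ξ) + B(ξ) < 0 for every ξ ≤ m. Then m ≤ g(t) ≤ M for all t ∈ [0,T]. -/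
/-- One-sided invariant region lemma: if `g` is differentiable on `[0,T]`,
`g 0 ≤ M`, and `deriv g < 0` wherever `g ≥ M` on `[0,T]`, then `g ≤ M` on `[0,T]`. -/
lemma invariant_upper_aux
    (T : ℝ) (g : ℝ → ℝ)
    (hg : ∀ t ∈ Set.Icc (0 : ℝ) T, DifferentiableAt ℝ g t)
    (M : ℝ) (h0 : g 0 ≤ M)
    (hd : ∀ t ∈ Set.Icc (0 : ℝ) T, M ≤ g t → deriv g t < 0) :
    ∀ t ∈ Set.Icc (0 : ℝ) T, g t ≤ M := by
  intro t ht
  by_contra h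
  push_neg at h
  have hcont : ContinuousOn g (Set.Icc 0 T) := fun x hx =>
    (hg x hx).continuousAt.continuousWithinAt
  have hsub : Set.Icc (0 : ℝ) t ⊆ Set.Icc 0 T :=
    Set.Icc_subset_Icc le_rfl ht.2
  set A : Set ℝ := Set.Icc 0 t ∩ g ⁻¹' Set.Iic M with hA
  have hAclosed : IsClosed A :=
    (hcont.mono hsub).preimage_isClosed_of_isClosed isClosed_Icc isClosed_Iic
  have hAne : A.Nonempty := ⟨0, ⟨le_rfl, ht.1⟩, h0⟩
  have hAbdd : BddAbove A := ⟨t, fun u hu => hu.1.2⟩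
  set s := sSup A with hs
  have hsA : s ∈ A := hAclosed.csSup_mem hAne hAbdd
  have hsle : s ≤ t := hsA.1.2
  have hs0 : 0 ≤ s := hsA.1.1
  have hgsM : g s ≤ M := hsA.2
  have hst : s < t := by
    rcases lt_or_eq_of_le hsle with h' | h'
    · exact h'
    · exfalso; rw [h'] at hgsM; linarith
  have hgt : ∀ u ∈ Set.Ioc s t, M < g u := by
    intro u hu
    by_contra hle
    push_neg at hle
    have : u ∈ A := ⟨⟨le_trans hs0 hu.1.le, hu.2⟩, hle⟩
    exact absurd (le_csSup hAbdd this) (not_le.mpr hu.1)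
  have hanti : StrictAntiOn g (Set.Icc s t) := by
    apply strictAntiOn_of_deriv_neg (convex_Icc s t)
    · exact hcont.mono (Set.Icc_subset_Icc hs0 ht.2)
    · intro u hu
      rw [interior_Icc] at hu
      have huT : u ∈ Set.Icc (0 : ℝ) T :=
        ⟨le_trans hs0 hu.1.le, le_trans hu.2.le ht.2⟩
      exact hd u huT (le_of_lt (hgt u ⟨hu.1, hu.2.le⟩))
  have : g t < g s :=
    hanti ⟨le_rfl, hsle⟩ ⟨hsle, le_rfl⟩ hst
  linarith

/-- Invariant-region comparison argument: if `g` is differentiable on `[0,T]` and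
satisfies the two-sided differential inequality `−B(g) ≤ g′ + σ(g) ≤ B(g)`, with
`m ≤ g(0) ≤ M`, `σ − B > 0` above `M` and `σ + B < 0` below `m`, then `m ≤ g(t) ≤ M`
for all `t ∈ [0,T]`. -/
theorem invariant_region_strain_bound
    (T : ℝ) (hT : 0 < T) (σ B : ℝ → ℝ) (g : ℝ → ℝ)
    (hg : ∀ t ∈ Set.Icc (0 : ℝ) T, DifferentiableAt ℝ g t)
    (hineq : ∀ t ∈ Set.Icc (0 : ℝ) T,
      -B (g t) ≤ deriv g t + σ (g t) ∧ deriv g t + σ (g t) ≤ B (g t))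
    (M m : ℝ) (h0 : m ≤ g 0 ∧ g 0 ≤ M)
    (hM : ∀ ξ : ℝ, M ≤ ξ → 0 < σ ξ - B ξ)
    (hm : ∀ ξ : ℝ, ξ ≤ m → σ ξ + B ξ < 0) :
    ∀ t ∈ Set.Icc (0 : ℝ) T, m ≤ g t ∧ g t ≤ M := by
  have hupper : ∀ t ∈ Set.Icc (0 : ℝ) T, g t ≤ M := by
    apply invariant_upper_aux T g hg M h0.2
    intro t ht hMg
    have h2 := (hineq t ht).2
    have := hM (g t) hMg
    linarith
  have hlower : ∀ t ∈ Set.Icc (0 : ℝ) T, m ≤ g t := by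
    have := invariant_upper_aux T (fun u => -g u) (fun t ht => (hg t ht).neg) (-m)
      (by simpa using h0.1)
      (by
        intro t ht hmg
        have hgm : g t ≤ m := by simpa using neg_le_neg hmg
        have h1 := (hineq t ht).1
        have h2 := hm (g t) hgm
        have : deriv (fun u => -g u) t = -deriv g t := by
          simp [deriv.neg]
        rw [this]
        linarith)
    intro t ht
    have := this t ht
    linarith
  exact fun t ht => ⟨hlower t ht, hupper t ht⟩
end

section
/- Let σ : ℝ → ℝ be continuously differentiable, T > 0, and let u, v : [0,1] × [0,T] → ℝ be continuously differentiable functions, with ∂_x v continuous, satisfying ∂_t u = ∂_x v and ∂_t v = ∂_x S on (0,1) × (0,T), where S = σ(u) + ∂_x v is assumed continuously differentiable in x, together with the traction-free boundary condition S(0,t) = 0 for all t ∈ (0,T). Define A(x,t) = ∫₀ˣ v(y,t) dy and g(x,t) = u(x,t) − A(x,t). Then for all (x,t) ∈ (0,1) × (0,T): ∂_t g(x,t) + σ(g(x,t)) = −( ∫₀¹ σ′( g(x,t) + (1−s)·A(x,t) ) ds )·A(x,t). -/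
/-!
Differentiating `A(x,t) = ∫₀ˣ v(y,t) dy` under the integral sign and using `∂_t v = ∂_x S`
together with `S(0,t) = 0` gives `∂_t A = S(x,t)`. Hence `∂_t g = ∂_x v − S = −σ(u) = −σ(g + A)`,
and `σ(g + A) − σ(g)` is the integral form of the first-order Taylor remainder of `σ` at `g`.
-/

open MeasureTheory intervalIntegral Set Function Topology

section

variable {E : Type*} [NormedAddCommGroup E] [NormedSpace ℝ E]

theorem DifferentiableWithinAt.hasDerivAt_slice {f : ℝ → ℝ → E} {s t : Set ℝ} {y τ : ℝ}
    (hf : DifferentiableWithinAt ℝ (uncurry f) (s ×ˢ t) (y, τ)) (hy : y ∈ s) (ht : t ∈ 𝓝 τ) :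
    HasDerivAt (f y) (fderivWithin ℝ (uncurry f) (s ×ˢ t) (y, τ) (0, 1)) τ := by
  have hline : HasDerivWithinAt (fun τ' => (y, τ')) ((0 : ℝ), (1 : ℝ)) t τ :=
    ((hasDerivAt_const τ y).prodMk (hasDerivAt_id τ)).hasDerivWithinAt
  exact (hf.hasFDerivWithinAt.comp_hasDerivWithinAt τ hline fun τ' hτ' => ⟨hy, hτ'⟩).hasDerivAt ht

theorem ContDiffOn.differentiableAt_slice {f : ℝ → ℝ → E} {s : Set ℝ} {c d y τ : ℝ}
    (hf : ContDiffOn ℝ 1 (uncurry f) (s ×ˢ Icc c d)) (hy : y ∈ s) (hτ : τ ∈ Ioo c d) :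
    DifferentiableAt ℝ (f y) τ :=
  (DifferentiableWithinAt.hasDerivAt_slice
    (hf.differentiableOn one_ne_zero (y, τ) ⟨hy, Ioo_subset_Icc_self hτ⟩) hy
    (Icc_mem_nhds hτ.1 hτ.2)).differentiableAt

theorem ContDiffOn.continuousOn_deriv_slice {f : ℝ → ℝ → E} {a b c d : ℝ} (hab : a < b)
    (hf : ContDiffOn ℝ 1 (uncurry f) (Icc a b ×ˢ Icc c d)) :
    ContinuousOn (fun p : ℝ × ℝ => deriv (f p.1) p.2) (Icc a b ×ˢ Ioo c d) := by
  rcases lt_or_ge c d with hcd | hdc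
  swap
  · simp [Ioo_eq_empty hdc.not_gt]
  have hsub : Icc a b ×ˢ Ioo c d ⊆ Icc a b ×ˢ Icc c d := prod_mono subset_rfl Ioo_subset_Icc_self
  have hfderiv : ContinuousOn
      (fun p => fderivWithin ℝ (uncurry f) (Icc a b ×ˢ Icc c d) p (0, 1)) (Icc a b ×ˢ Icc c d) :=
    (hf.continuousOn_fderivWithin ((uniqueDiffOn_Icc hab).prod (uniqueDiffOn_Icc hcd))
      le_rfl).clm_apply continuousOn_const
  refine (hfderiv.mono hsub).congr fun p hp => ?_
  exact (DifferentiableWithinAt.hasDerivAt_slice (hf.differentiableOn one_ne_zero p (hsub hp))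
    hp.1 (Icc_mem_nhds hp.2.1 hp.2.2)).deriv

theorem ContDiffOn.hasDerivAt_intervalIntegral {f : ℝ → ℝ → E} {a b c d τ : ℝ} (hab : a < b)
    (hf : ContDiffOn ℝ 1 (uncurry f) (Icc a b ×ˢ Icc c d)) (hτ : τ ∈ Ioo c d) :
    IntervalIntegrable (fun y => deriv (f y) τ) volume a b ∧
      HasDerivAt (fun t => ∫ y in a..b, f y t) (∫ y in a..b, deriv (f y) τ) τ := by
  obtain ⟨ε, hε, hball⟩ := Metric.nhds_basis_closedBall.mem_iff.1 (Ioo_mem_nhds hτ.1 hτ.2)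
  have hderiv := hf.continuousOn_deriv_slice hab
  obtain ⟨C, hC⟩ := (isCompact_Icc.prod (isCompact_closedBall τ ε)).exists_bound_of_continuousOn
    (hderiv.mono (prod_mono subset_rfl hball))
  have hIoc : uIoc a b ⊆ Icc a b := uIoc_of_le hab.le ▸ Ioc_subset_Icc_self
  have hball' : Metric.ball τ ε ⊆ Ioo c d := Metric.ball_subset_closedBall.trans hball
  refine intervalIntegral.hasDerivAt_integral_of_dominated_loc_of_deriv_le (μ := volume)
    (F := fun t y => f y t) (F' := fun t y => deriv (f y) t) (bound := fun _ => C)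
    (Metric.ball_mem_nhds τ hε) ?_ ?_ ?_ ?_ intervalIntegrable_const ?_
  · filter_upwards [Ioo_mem_nhds hτ.1 hτ.2] with t ht
    exact ((hf.continuousOn.comp (Continuous.prodMk_left t).continuousOn fun y hy =>
      ⟨hy, Ioo_subset_Icc_self ht⟩).mono hIoc).aestronglyMeasurable measurableSet_uIoc
  · exact (hf.continuousOn.comp (Continuous.prodMk_left τ).continuousOn fun y hy =>
      ⟨uIcc_of_le hab.le ▸ hy, Ioo_subset_Icc_self hτ⟩).intervalIntegrable
  · exact ((hderiv.comp (Continuous.prodMk_left τ).continuousOn fun y hy => ⟨hy, hτ⟩).mono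
      hIoc).aestronglyMeasurable measurableSet_uIoc
  · exact .of_forall fun y hy t ht => hC (y, t) ⟨hIoc hy, Metric.ball_subset_closedBall ht⟩
  · exact .of_forall fun y hy t ht =>
      (hf.differentiableAt_slice (hIoc hy) (hball' ht)).hasDerivAt

theorem ContDiffOn.hasDerivAt_intervalIntegral_of_hasDerivAt_flux [CompleteSpace E]
    {f : ℝ → ℝ → E} {F : ℝ → E} {a b c d τ : ℝ} (hab : a < b)
    (hf : ContDiffOn ℝ 1 (uncurry f) (Icc a b ×ˢ Icc c d)) (hτ : τ ∈ Ioo c d) (hF : ContinuousOn F (Icc a b))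
    (hflux : ∀ y ∈ Ioo a b, HasDerivAt F (deriv (f y) τ) y) :
    HasDerivAt (fun t => ∫ y in a..b, f y t) (F b - F a) τ := by
  obtain ⟨hint, hderiv⟩ := hf.hasDerivAt_intervalIntegral hab hτ
  rwa [← intervalIntegral.integral_eq_sub_of_hasDerivAt_of_le hab.le hF hflux hint]

end

theorem ContDiff.eq_add_integral_deriv_mul {σ : ℝ → ℝ} (hσ : ContDiff ℝ 1 σ) (a h : ℝ) :
    σ (a + h) = σ a + (∫ s in (0 : ℝ)..1, deriv σ (a + (1 - s) * h)) * h := by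
  have hline : ∀ s : ℝ, HasDerivAt (fun s => a + (1 - s) * h) (-h) s := fun s => by
    simpa using (((hasDerivAt_id s).const_sub 1).mul_const h).const_add a
  have hcomp : ∀ s ∈ uIcc (0 : ℝ) 1,
      HasDerivAt (fun s => σ (a + (1 - s) * h)) (deriv σ (a + (1 - s) * h) * -h) s :=
    fun s _ => ((hσ.differentiable one_ne_zero _).hasDerivAt).comp s (hline s)
  have hint : IntervalIntegrable (fun s => deriv σ (a + (1 - s) * h) * -h) volume 0 1 :=
    ((hσ.continuous_deriv le_rfl).comp (by fun_prop)).mul continuous_const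
      |>.intervalIntegrable _ _
  have hFTC := integral_eq_sub_of_hasDerivAt hcomp hint
  simp only [intervalIntegral.integral_mul_const, sub_self, sub_zero, zero_mul, one_mul,
    add_zero] at hFTC
  linarith

theorem andrews_ball_variable_ode_general
    (σ : ℝ → ℝ) (hσ : ContDiff ℝ 1 σ) (T : ℝ)
    (u v : ℝ → ℝ → ℝ)
    (hu : ContDiffOn ℝ 1 (fun p : ℝ × ℝ => u p.1 p.2) (Set.Icc 0 1 ×ˢ Set.Icc 0 T))
    (hv : ContDiffOn ℝ 1 (fun p : ℝ × ℝ => v p.1 p.2) (Set.Icc 0 1 ×ˢ Set.Icc 0 T))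
    (hvx : Continuous (fun p : ℝ × ℝ => deriv (fun x' => v x' p.2) p.1))
    (S : ℝ → ℝ → ℝ)
    (hS : ∀ x t, S x t = σ (u x t) + deriv (fun x' => v x' t) x)
    (hSx : ∀ t ∈ Set.Ioo (0 : ℝ) T, ContDiffOn ℝ 1 (fun x => S x t) (Set.Ioo 0 1))
    (hpde₁ : ∀ x ∈ Set.Ioo (0 : ℝ) 1, ∀ t ∈ Set.Ioo (0 : ℝ) T,
      deriv (fun s => u x s) t = deriv (fun x' => v x' t) x)
    (hpde₂ : ∀ x ∈ Set.Ioo (0 : ℝ) 1, ∀ t ∈ Set.Ioo (0 : ℝ) T,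
      deriv (fun s => v x s) t = deriv (fun x' => S x' t) x)
    (hbc : ∀ t ∈ Set.Ioo (0 : ℝ) T, S 0 t = 0)
    (A g : ℝ → ℝ → ℝ)
    (hA : ∀ x t, A x t = ∫ y in (0 : ℝ)..x, v y t)
    (hg : ∀ x t, g x t = u x t - A x t) :
    ∀ x ∈ Set.Ioo (0 : ℝ) 1, ∀ t ∈ Set.Ioo (0 : ℝ) T,
      deriv (fun s => g x s) t + σ (g x t) =
        -(∫ s in (0 : ℝ)..1, deriv σ (g x t + (1 - s) * A x t)) * A x t := by
  intro x hx t ht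
  have hx1 : Icc 0 x ⊆ Icc (0 : ℝ) 1 := Icc_subset_Icc le_rfl hx.2.le
  have hS_cont : ContinuousOn (fun y => S y t) (Icc 0 x) := by
    simp only [hS]
    refine (hσ.continuous.comp_continuousOn ?_).add
      (hvx.comp (Continuous.prodMk_left t)).continuousOn
    exact hu.continuousOn.comp (Continuous.prodMk_left t).continuousOn
      fun y hy => ⟨hx1 hy, Ioo_subset_Icc_self ht⟩
  have hS_flux : ∀ y ∈ Ioo 0 x, HasDerivAt (fun y => S y t) (deriv (fun s => v y s) t) y := by
    intro y hy
    have hy1 : y ∈ Ioo (0 : ℝ) 1 := ⟨hy.1, hy.2.trans hx.2⟩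
    rw [hpde₂ y hy1 t ht]
    exact (((hSx t ht).differentiableOn one_ne_zero y hy1).differentiableAt
      (Ioo_mem_nhds hy1.1 hy1.2)).hasDerivAt
  have hA_deriv : HasDerivAt (fun s => A x s) (S x t) t := by
    simpa only [hA, hbc t ht, sub_zero] using (hv.mono (prod_mono hx1 subset_rfl))
      |>.hasDerivAt_intervalIntegral_of_hasDerivAt_flux hx.1 ht hS_cont hS_flux
  have hu_deriv : HasDerivAt (fun s => u x s) (deriv (fun x' => v x' t) x) t := by
    rw [← hpde₁ x hx t ht]
    exact (hu.differentiableAt_slice (Ioo_subset_Icc_self hx) ht).hasDerivAt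
  have hg_deriv : deriv (fun s => g x s) t = -σ (u x t) := by
    have hdiff : HasDerivAt (fun s => u x s - A x s) (deriv (fun x' => v x' t) x - S x t) t :=
      hu_deriv.sub hA_deriv
    simp only [hg, hdiff.deriv, hS]
    ring
  rw [hg_deriv, show u x t = g x t + A x t by rw [hg]; ring, hσ.eq_add_integral_deriv_mul]
  ring

/-- The Andrews–Ball variable `g(x,t) = u(x,t) − ∫₀ˣ v(y,t)dy` of the viscoelastic
shear system `∂_t u = ∂_x v`, `∂_t v = ∂_x S`, `S = σ(u) + ∂_x v`, with traction-free
boundary condition `S(0,t) = 0`, satisfies the ordinary differential equation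
`∂_t g + σ(g) = −(∫₀¹ σ′(g + (1−s)A) ds)·A` where `A(x,t) = ∫₀ˣ v(y,t)dy`. -/
theorem andrews_ball_variable_ode
    (σ : ℝ → ℝ) (hσ : ContDiff ℝ 1 σ) (T : ℝ) (hT : 0 < T)
    (u v : ℝ → ℝ → ℝ)
    (hu : ContDiffOn ℝ 1 (fun p : ℝ × ℝ => u p.1 p.2) (Set.Icc 0 1 ×ˢ Set.Icc 0 T))
    (hv : ContDiffOn ℝ 1 (fun p : ℝ × ℝ => v p.1 p.2) (Set.Icc 0 1 ×ˢ Set.Icc 0 T))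
    (hvx : Continuous (fun p : ℝ × ℝ => deriv (fun x' => v x' p.2) p.1))
    (S : ℝ → ℝ → ℝ)
    (hS : ∀ x t, S x t = σ (u x t) + deriv (fun x' => v x' t) x)
    (hSx : ∀ t ∈ Set.Ioo (0 : ℝ) T, ContDiffOn ℝ 1 (fun x => S x t) (Set.Ioo 0 1))
    (hpde₁ : ∀ x ∈ Set.Ioo (0 : ℝ) 1, ∀ t ∈ Set.Ioo (0 : ℝ) T,
      deriv (fun s => u x s) t = deriv (fun x' => v x' t) x)
    (hpde₂ : ∀ x ∈ Set.Ioo (0 : ℝ) 1, ∀ t ∈ Set.Ioo (0 : ℝ) T,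
      deriv (fun s => v x s) t = deriv (fun x' => S x' t) x)
    (hbc : ∀ t ∈ Set.Ioo (0 : ℝ) T, S 0 t = 0)
    (A g : ℝ → ℝ → ℝ)
    (hA : ∀ x t, A x t = ∫ y in (0 : ℝ)..x, v y t)
    (hg : ∀ x t, g x t = u x t - A x t) :
    ∀ x ∈ Set.Ioo (0 : ℝ) 1, ∀ t ∈ Set.Ioo (0 : ℝ) T,
      deriv (fun s => g x s) t + σ (g x t) =
        -(∫ s in (0 : ℝ)..1, deriv σ (g x t + (1 - s) * A x t)) * A x t :=
  andrews_ball_variable_ode_general σ hσ T u v hu hv hvx S hS hSx hpde₁ hpde₂ hbc A g hA hg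
end
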